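/- Let m = p_1^{k_1} ··· p_h^{k_h} and f(x_l,...,x_r) = (p_1 p_2 ··· p_h)·Σ_{i=l}^{r-1} λ_i x_i + λ_r x_r (mod m) with gcd(λ_r, m) = 1 and 0 < l < r. Then the cellular automaton T_{f[l,r]} over Z_m is invertible and is a Bernoulli automorphism with respect to the uniform Bernoulli measure. -/

import Mathlib

/-!
The rule is `T = λ_r σ^r + c L` with `σ` the shift, `L` linear and `c = p₁ ⋯ p_h` nilpotent in
`ZMod m` (as `m ∣ c ^ m`). A unit plus a multiple by a nilpotent scalar is a unit, so `T` is a
bijective linear map.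

A surjective measurable endomorphism of `(ZMod m)^ℤ` preserves the uniform Bernoulli measure `μ`:
`μ` is translation invariant, so all fibres of a surjective homomorphism onto a finite group have
the same measure, and cylinders are such fibres.

The generating partition is the one by the word on the cells `0, …, r-1`. Since `λ_r` is a unit,
the rule can be solved for its rightmost cell. Hence the words of `T^n x` for all `n ∈ ℤ`
determine `x`, and for each `s` the words of `T^t x`, `t ≤ s`, take every value (the map is
injective on configurations supported in `[0, (s+1)r)`, a set of the same finite size). So the
coding `x ↦ (word of T^n x)_{n ∈ ℤ}` is injective, conjugates `T` to the shift and sends `μ` to the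
uniform Bernoulli measure on words; being a measurable injection of standard Borel spaces, it has a
measurable inverse on its image.
-/

open MeasureTheory
open scoped ENNReal

instance (m : ℕ) : MeasurableSpace (ZMod m) := ⊤

theorem isUnit_smul_add_of_isNilpotent {R A : Type*} [CommRing R] [Ring A] [Algebra R A]
    {c : R} (hc : IsNilpotent c) (a : A) {u : A} (hu : IsUnit u) : IsUnit (c • a + u) := by
  obtain ⟨u, rfl⟩ := hu
  have hnil : IsNilpotent (c • (↑u⁻¹ * a)) := by
    obtain ⟨k, hk⟩ := hc
    exact ⟨k, by rw [smul_pow, hk, zero_smul]⟩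
  have hdecomp : c • a + ↑u = ↑u * (1 + c • (↑u⁻¹ * a)) := by
    rw [mul_add, mul_one, mul_smul_comm, Units.mul_inv_cancel_left, add_comm]
  rw [hdecomp]
  exact u.isUnit.mul (IsNilpotent.isUnit_one_add hnil)

section LinearCA

variable {R : Type*} [CommRing R]

noncomputable def linearCA (l r : ℤ) (lam : ℤ → R) (c : R) : Module.End R (ℤ → R) :=
  c • ∑ i ∈ Finset.Icc l (r - 1), lam i • LinearMap.funLeft R R (· + i)
    + lam r • LinearMap.funLeft R R (· + r)

variable {l r : ℤ} {lam : ℤ → R} {c : R}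

theorem linearCA_apply (x : ℤ → R) (n : ℤ) :
    linearCA l r lam c x n =
      c * ∑ i ∈ Finset.Icc l (r - 1), lam i * x (n + i) + lam r * x (n + r) := by
  simp [linearCA, Finset.sum_apply, LinearMap.funLeft_apply]

theorem isUnit_linearCA (hc : IsNilpotent c) (hr : IsUnit (lam r)) :
    IsUnit (linearCA l r lam c) := by
  refine isUnit_smul_add_of_isNilpotent hc _ ?_
  have hshift : IsUnit (LinearMap.funLeft R R (· + r)) :=
    (Module.End.isUnit_iff _).mpr
      ⟨LinearMap.funLeft_injective_of_surjective _ _ _ (add_right_surjective r),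
        LinearMap.funLeft_surjective_of_injective _ _ _ (add_left_injective r)⟩
  rw [Algebra.smul_def]
  exact (hr.map _).mul hshift

theorem linearCA_apply_eq_zero_of_forall_ge (hlr : l ≤ r) {a : ℤ} {x : ℤ → R}
    (hx : ∀ i, a ≤ i → x i = 0) {n : ℤ} (hn : a ≤ n + l) : linearCA l r lam c x n = 0 := by
  rw [linearCA_apply, hx _ (by omega), mul_zero, add_zero,
    Finset.sum_eq_zero fun i hi => by
      rw [hx _ (by linarith [(Finset.mem_Icc.mp hi).1]), mul_zero], mul_zero]

theorem iterate_linearCA_apply_eq_zero_of_forall_ge (hl : 0 < l) (hlr : l ≤ r) {a : ℤ}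
    {x : ℤ → R} (hx : ∀ i, a ≤ i → x i = 0) (k : ℕ) {n : ℤ} (hn : a ≤ n + k) :
    (linearCA l r lam c)^[k] x n = 0 := by
  induction k generalizing n with
  | zero => simpa using hx n (by simpa using hn)
  | succ k ih =>
    rw [Function.iterate_succ_apply']
    exact linearCA_apply_eq_zero_of_forall_ge hlr (a := a - k) (fun i hi => ih (by omega))
      (by push_cast at hn; omega)

-- `(T^t x)_i` with `i ≥ r` is recovered from `(T^(t+1) x)_(i-r)` and the cells left of `i` at
-- time `t`; none of these increases `t * r + i`.
theorem iterate_linearCA_apply_eq_zero_of_window (hl : 0 ≤ l) (hlr : l < r)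
    (hr : IsUnit (lam r)) {s : ℕ} {x : ℤ → R}
    (hx : ∀ t ≤ s, ∀ i, 0 ≤ i → i < r → (linearCA l r lam c)^[t] x i = 0)
    (t : ℕ) {i : ℤ} (hi : 0 ≤ i) (hts : t * r + i < (s + 1) * r) :
    (linearCA l r lam c)^[t] x i = 0 := by
  obtain ⟨k, rfl⟩ := Int.eq_ofNat_of_zero_le hi
  induction k using Nat.strong_induction_on generalizing t with
  | _ k ih =>
    by_cases hkr : (k : ℤ) < r
    · exact hx t (by by_contra! h; nlinarith) k hi hkr
    have hk : ((k - r.toNat : ℕ) : ℤ) = k - r := by omega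
    have hnext := ih (k - r.toNat) (by omega) (t + 1) (by omega) (by push_cast; linarith)
    rw [Function.iterate_succ_apply', linearCA_apply,
      Finset.sum_eq_zero fun j hj => ?_, mul_zero, zero_add, hk, sub_add_cancel] at hnext
    · exact (hr.mul_right_eq_zero).mp hnext
    · have hj := Finset.mem_Icc.mp hj
      rw [show ((k - r.toNat : ℕ) : ℤ) + j = ((k - r.toNat + j.toNat : ℕ) : ℤ) by omega,
        ih _ (by omega) t (by omega) (by push_cast; omega), mul_zero]

theorem eq_zero_of_forall_zpow_linearCA_window (hl : 0 < l) (hlr : l < r) (hr : IsUnit (lam r))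
    {u : (Module.End R (ℤ → R))ˣ} (hu : ↑u = linearCA l r lam c) {z : ℤ → R}
    (hz : ∀ n : ℤ, ∀ i, 0 ≤ i → i < r → (↑(u ^ n) : Module.End R (ℤ → R)) z i = 0) :
    z = 0 := by
  funext k
  set K := (-k).toNat
  set w := (↑(u ^ (-(K : ℤ))) : Module.End R (ℤ → R)) z
  have hiter : ∀ t : ℕ,
      (linearCA l r lam c)^[t] w = (↑(u ^ ((t : ℤ) - K)) : Module.End R _) z := by
    intro t
    rw [← Module.End.coe_pow, ← hu, ← Units.val_pow_eq_pow_val, ← Module.End.mul_apply,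
      ← Units.val_mul, ← zpow_natCast, ← zpow_add, sub_eq_add_neg]
  have hw : ∀ i, 0 ≤ i → w i = 0 := fun i hi => by
    simpa using iterate_linearCA_apply_eq_zero_of_window hl.le hlr hr (s := i.toNat)
      (fun t _ j hj0 hjr => by rw [hiter]; exact hz _ j hj0 hjr) 0 hi
      (by rw [Int.toNat_of_nonneg hi]; push_cast; nlinarith)
  have hzw : z = (linearCA l r lam c)^[K] w := by rw [hiter]; simp
  rw [hzw]
  exact iterate_linearCA_apply_eq_zero_of_forall_ge hl hlr.le hw K (by omega)

noncomputable def windowHistory (A : Module.End R (ℤ → R)) (s w : ℕ) :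
    (ℤ → R) →ₗ[R] Fin (s + 1) → Fin w → R :=
  LinearMap.pi fun t => LinearMap.pi fun i => LinearMap.proj (i : ℤ) ∘ₗ A ^ (t : ℕ)

theorem windowHistory_apply (A : Module.End R (ℤ → R)) (s w : ℕ) (x : ℤ → R) (t : Fin (s + 1))
    (i : Fin w) : windowHistory A s w x t i = A^[t] x i := by
  simp [windowHistory, Module.End.coe_pow]

theorem windowHistory_linearCA_surjective [Fintype R] (hl : 0 ≤ l) (hlr : l < r)
    (hr : IsUnit (lam r)) (s : ℕ) :
    Function.Surjective (windowHistory (linearCA l r lam c) s r.toNat) := by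
  set extend := Function.ExtendByZero.linearMap R (fun j : Fin ((s + 1) * r.toNat) => (j : ℤ))
  have hcoe : Function.Injective (fun j : Fin ((s + 1) * r.toNat) => (j : ℤ)) :=
    Nat.cast_injective.comp Fin.val_injective
  have hinj : Function.Injective (windowHistory (linearCA l r lam c) s r.toNat ∘ₗ extend) := by
    refine (injective_iff_map_eq_zero _).mpr fun v hv => funext fun j => ?_
    have hzero := iterate_linearCA_apply_eq_zero_of_window hl hlr hr (s := s) (x := extend v)
      (fun t ht i hi0 hir => by
        have := congrFun (congrFun hv (⟨t, by omega⟩ : Fin (s + 1)))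
          (⟨i.toNat, by omega⟩ : Fin r.toNat)
        rwa [LinearMap.comp_apply, windowHistory_apply, Int.toNat_of_nonneg hi0] at this)
      0 (i := j) (by positivity) (by
        have hj := j.2
        have hr0 : (r.toNat : ℤ) = r := by omega
        zify at hj; push_cast; nlinarith)
    simpa [extend, hcoe.extend_apply] using hzero
  have hbij := (Fintype.bijective_iff_injective_and_card _).mpr ⟨hinj, by
    simp only [Fintype.card_fun, Fintype.card_fin, ← pow_mul, mul_comm]⟩
  rw [LinearMap.coe_comp] at hbij
  exact hbij.surjective.of_comp

theorem measurable_linearCA [MeasurableSpace R] [DiscreteMeasurableSpace R] [Countable R] :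
    Measurable (linearCA l r lam c) := by
  refine measurable_pi_iff.mpr fun n => ?_
  simp only [linearCA_apply]
  fun_prop

end LinearCA

section UniformBernoulli

variable {α : Type*} [Fintype α] [MeasurableSpace α]

def IsUniformBernoulli (μ : Measure (ℤ → α)) : Prop :=
  ∀ (a : ℤ) (s : ℕ) (j : ℕ → α),
    μ {x | ∀ t : ℕ, t ≤ s → x (a + t) = j t} = (Fintype.card α : ℝ≥0∞)⁻¹ ^ (s + 1)

variable [DiscreteMeasurableSpace α]

theorem setOf_forall_le_eq_eq_preimage {β : Type*} (a : ℤ) (s : ℕ) (j : ℕ → β) :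
    {x : ℤ → β | ∀ t : ℕ, t ≤ s → x (a + t) = j t}
      = (fun x (t : Fin (s + 1)) => x (a + t)) ⁻¹' {fun t : Fin (s + 1) => j t} := by
  ext x
  simp only [Set.mem_ofPred_eq, Set.mem_preimage, Set.mem_singleton_iff, funext_iff,
    Fin.forall_iff, Nat.lt_succ_iff]

theorem measurableSet_setOf_forall_le_eq (a : ℤ) (s : ℕ) (j : ℕ → α) :
    MeasurableSet {x : ℤ → α | ∀ t : ℕ, t ≤ s → x (a + t) = j t} := by
  measurability

theorem IsUniformBernoulli.ext {μ ν : Measure (ℤ → α)} [IsFiniteMeasure μ]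
    (hμ : IsUniformBernoulli μ) (hν : IsUniformBernoulli ν) : μ = ν := by
  have hIcc : ∀ (a : ℤ) (s : ℕ), μ.map (Finset.Icc a (a + s)).restrict
      = ν.map (Finset.Icc a (a + s)).restrict := by
    intro a s
    refine Measure.ext_iff_singleton.mpr fun v => ?_
    have hv : ∀ t : ℕ, ∀ i (hi : i ∈ Finset.Icc a (a + s)), a + t = i →
        v ⟨a + min t s, Finset.mem_Icc.mpr (by omega)⟩ = v ⟨i, hi⟩ := fun t i hi hti =>
      congr_arg v (Subtype.ext (by simp at hi; simp; omega))
    have hcyl : (Finset.Icc a (a + s)).restrict ⁻¹' ({v} : Set (Finset.Icc a (a + s) → α))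
        = {x : ℤ → α | ∀ t : ℕ, t ≤ s →
            x (a + t) = v ⟨a + min t s, Finset.mem_Icc.mpr (by omega)⟩} := by
      ext x
      simp only [Set.mem_preimage, Set.mem_singleton_iff, funext_iff, Finset.restrict,
        Set.mem_ofPred_eq, Subtype.forall]
      constructor
      · intro h t ht
        rw [h _ (Finset.mem_Icc.mpr (by omega)), hv t _ _ rfl]
      · intro h i hi
        have hi' := Finset.mem_Icc.mp hi
        rw [← hv (i - a).toNat i hi (by omega), ← h _ (by omega)]
        congr 1
        omega
    rw [Measure.map_apply (Finset.measurable_restrict _) (measurableSet_singleton v),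
      Measure.map_apply (Finset.measurable_restrict _) (measurableSet_singleton v), hcyl, hμ, hν]
  -- every finite set of cells lies in an interval
  refine IsProjectiveLimit.unique (P := fun I => μ.map I.restrict) (fun I => rfl) fun I => ?_
  set M := I.sup Int.natAbs
  have hI : I ⊆ Finset.Icc (-M : ℤ) (-M + (2 * M : ℕ)) := fun i hi => by
    have := Finset.le_sup (f := Int.natAbs) hi
    simp only [Finset.mem_Icc]
    omega
  show ν.map I.restrict = μ.map I.restrict
  rw [← Finset.restrict₂_comp_restrict hI,
    ← Measure.map_map (Finset.measurable_restrict₂ hI) (Finset.measurable_restrict _),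
    ← Measure.map_map (Finset.measurable_restrict₂ hI) (Finset.measurable_restrict _), hIcc]

theorem IsUniformBernoulli.isAddRightInvariant [AddGroup α] {μ : Measure (ℤ → α)}
    [IsFiniteMeasure μ] (hμ : IsUniformBernoulli μ) : μ.IsAddRightInvariant := by
  refine ⟨fun g => IsUniformBernoulli.ext (fun a s j => ?_) hμ⟩
  rw [Measure.map_apply (measurable_add_const g) (measurableSet_setOf_forall_le_eq a s j)]
  convert hμ a s (fun t => j t - g (a + t)) using 2
  ext x
  simp [eq_sub_iff_add_eq]

theorem measure_preimage_singleton_of_surjective {G H : Type*} [AddGroup G] [MeasurableSpace G]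
    [MeasurableAdd G] [AddGroup H] [Fintype H] {μ : Measure G} [IsProbabilityMeasure μ]
    [μ.IsAddRightInvariant] {F : G →+ H} (hF : Function.Surjective F)
    (hmeas : ∀ h, MeasurableSet (F ⁻¹' {h})) (h : H) :
    μ (F ⁻¹' {h}) = (Fintype.card H : ℝ≥0∞)⁻¹ := by
  have hfiber : ∀ h, μ (F ⁻¹' {h}) = μ (F ⁻¹' {0}) := fun h => by
    obtain ⟨g, rfl⟩ := hF h
    rw [← measure_preimage_add_right μ (-g) (F ⁻¹' {0})]
    congr 1
    ext x
    simp [add_neg_eq_zero]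
  have hsum : ∑ h, μ (F ⁻¹' {h}) = 1 := by
    rw [sum_measure_preimage_singleton _ fun h _ => hmeas h, Finset.coe_univ, Set.preimage_univ,
      measure_univ]
  simp only [hfiber, Finset.sum_const, Finset.card_univ, nsmul_eq_mul] at hsum ⊢
  exact ENNReal.eq_inv_of_mul_eq_one_left (by rwa [mul_comm])

theorem IsUniformBernoulli.map_eq_of_surjective [AddCommGroup α] {μ : Measure (ℤ → α)}
    [IsProbabilityMeasure μ] (hμ : IsUniformBernoulli μ) {T : (ℤ → α) →+ (ℤ → α)}
    (hT : Function.Surjective T) (hTm : Measurable T) : μ.map T = μ := by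
  have := hμ.isAddRightInvariant
  refine IsUniformBernoulli.ext (fun a s j => ?_) hμ
  let F : (ℤ → α) →+ (Fin (s + 1) → α) :=
    { toFun x t := x (a + t), map_zero' := rfl, map_add' := fun _ _ => rfl }
  have hFm : Measurable F := measurable_pi_lambda _ fun t => measurable_pi_apply _
  have hF : Function.Surjective F := fun y => by
    refine ⟨fun i => if h : a ≤ i ∧ i ≤ a + s then y ⟨(i - a).toNat, by omega⟩ else 0, ?_⟩
    funext t
    have ht := t.2
    simp only [F, AddMonoidHom.coe_mk, ZeroHom.coe_mk]
    rw [dif_pos (by omega)]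
    congr 1
    ext
    simp
  rw [Measure.map_apply hTm (measurableSet_setOf_forall_le_eq a s j),
    setOf_forall_le_eq_eq_preimage, ← Set.preimage_comp,
    show (fun x (t : Fin (s + 1)) => x (a + t)) ∘ T = F.comp T from rfl,
    measure_preimage_singleton_of_surjective (F := F.comp T) (hF.comp hT)
      (fun h => (hFm.comp hTm) (measurableSet_singleton h)),
    Fintype.card_fun, Fintype.card_fin, Nat.cast_pow, ENNReal.inv_pow]

theorem IsUniformBernoulli.map_equiv {β : Type*} [Fintype β] [MeasurableSpace β]
    [DiscreteMeasurableSpace β] {μ : Measure (ℤ → α)} (hμ : IsUniformBernoulli μ) (e : α ≃ β) :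
    IsUniformBernoulli (μ.map fun y n => e (y n)) := fun a s j => by
  rw [Measure.map_apply (by fun_prop) (measurableSet_setOf_forall_le_eq a s j),
    Fintype.card_congr e.symm]
  convert hμ a s (fun t => e.symm (j t)) using 2
  ext y
  simp [← e.eq_symm_apply]

end UniformBernoulli

theorem Module.End.measurePreserving_units_zpow {R M : Type*} [Semiring R] [AddCommMonoid M]
    [Module R M] [MeasurableSpace M] [StandardBorelSpace M] {μ : Measure M}
    {u : (Module.End R M)ˣ} (hu : MeasurePreserving u μ μ) (n : ℤ) :
    MeasurePreserving (↑(u ^ n) : Module.End R M) μ μ := by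
  have hleft : Function.LeftInverse (↑u⁻¹ : Module.End R M) u := fun x => by
    rw [← Module.End.mul_apply, u.inv_mul, Module.End.one_apply]
  have hright : Function.RightInverse (↑u⁻¹ : Module.End R M) u := fun x => by
    rw [← Module.End.mul_apply, u.mul_inv, Module.End.one_apply]
  have hemb := hu.measurable.measurableEmbedding hleft.injective
  have hinv : MeasurePreserving (↑u⁻¹ : Module.End R M) μ μ := by
    have hm : Measurable (↑u⁻¹ : Module.End R M) := fun s hs => by
      rw [← Set.image_eq_preimage_of_inverse hleft hright]
      exact hemb.measurableSet_image.mpr hs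
    refine ⟨hm, ?_⟩
    nth_rw 1 [← hu.map_eq]
    rw [Measure.map_map hm hu.measurable, hleft.comp_eq_id, Measure.map_id]
  induction n using Int.induction_on with
  | zero => simpa [Module.End.coe_one] using MeasurePreserving.id μ
  | succ n ih => simpa [zpow_add_one, Module.End.coe_mul] using ih.comp hu
  | pred n ih => simpa [zpow_sub_one, Module.End.coe_mul] using ih.comp hinv

theorem MeasurableEmbedding.exists_measurePreserving_inverse {X Y : Type*} [MeasurableSpace X]
    [MeasurableSpace Y] [Nonempty X] {f : X → Y} (hf : MeasurableEmbedding f) (μ : Measure X) :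
    ∃ g : Y → X, MeasurePreserving g (μ.map f) μ ∧ (∀ x, g (f x) = x) ∧
      ∀ᵐ y ∂μ.map f, f (g y) = y := by
  set g := Function.extend f (fun x => x) fun _ => Classical.arbitrary X
  have hgf : ∀ x, g (f x) = x := hf.injective.extend_apply _ _
  have hg : Measurable g := hf.measurable_extend measurable_id' measurable_const
  refine ⟨g, ⟨hg, ?_⟩, hgf, hf.ae_map_iff.mpr (ae_of_all _ fun x => by rw [hgf])⟩
  rw [Measure.map_map hg hf.measurable, show g ∘ f = fun x => x from funext hgf, Measure.map_id']

section WindowCoding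

variable {R : Type*} [CommRing R]

noncomputable def windowCoding (u : (Module.End R (ℤ → R))ˣ) (w : ℕ) (x : ℤ → R) (n : ℤ) :
    Fin w → R :=
  fun i => (↑(u ^ n) : Module.End R (ℤ → R)) x i

theorem windowCoding_units_apply (u : (Module.End R (ℤ → R))ˣ) (w : ℕ) (x : ℤ → R) (n : ℤ) :
    windowCoding u w ((u : Module.End R (ℤ → R)) x) n = windowCoding u w x (n + 1) := by
  ext i
  simp [windowCoding, zpow_add_one, Module.End.mul_apply]

variable {l r : ℤ} {lam : ℤ → R} {c : R} {u : (Module.End R (ℤ → R))ˣ}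

theorem windowCoding_injective (hl : 0 < l) (hlr : l < r) (hr : IsUnit (lam r))
    (hu : ↑u = linearCA l r lam c) : Function.Injective (windowCoding u r.toNat) := by
  intro x x' h
  rw [← sub_eq_zero]
  refine eq_zero_of_forall_zpow_linearCA_window hl hlr hr hu fun n i hi0 hir => ?_
  have := congrFun (congrFun h n) ⟨i.toNat, by omega⟩
  simp only [windowCoding, Int.toNat_of_nonneg hi0] at this
  rw [map_sub, Pi.sub_apply, this, sub_self]

variable [MeasurableSpace R]

theorem measurable_windowCoding (hu : ∀ n : ℤ, Measurable (↑(u ^ n) : Module.End R (ℤ → R)))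
    (w : ℕ) : Measurable (windowCoding u w) :=
  measurable_pi_lambda _ fun n => measurable_pi_lambda _ fun _ =>
    (measurable_pi_apply _).comp (hu n)

variable [Fintype R] [DiscreteMeasurableSpace R]

theorem IsUniformBernoulli.measurePreserving_zpow_linearCA (hu : ↑u = linearCA l r lam c)
    {μ : Measure (ℤ → R)} [IsProbabilityMeasure μ] (hμ : IsUniformBernoulli μ) (n : ℤ) :
    MeasurePreserving (↑(u ^ n) : Module.End R (ℤ → R)) μ μ := by
  have hsurj := ((Module.End.isUnit_iff _).mp (hu ▸ u.isUnit)).surjective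
  refine Module.End.measurePreserving_units_zpow ?_ n
  rw [hu]
  exact ⟨measurable_linearCA,
    hμ.map_eq_of_surjective (T := (linearCA l r lam c).toAddMonoidHom) hsurj measurable_linearCA⟩

theorem isUniformBernoulli_map_windowCoding (hl : 0 ≤ l) (hlr : l < r)
    (hr : IsUnit (lam r)) (hu : ↑u = linearCA l r lam c) {μ : Measure (ℤ → R)}
    [IsProbabilityMeasure μ] (hμ : IsUniformBernoulli μ)
    (hmp : ∀ n : ℤ, MeasurePreserving (↑(u ^ n) : Module.End R (ℤ → R)) μ μ) :
    IsUniformBernoulli (μ.map (windowCoding u r.toNat)) := fun a s j => by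
  have := hμ.isAddRightInvariant
  set H := windowHistory (linearCA l r lam c) s r.toNat
  have hH : (fun x (t : Fin (s + 1)) => x (a + t)) ∘ windowCoding u r.toNat = H ∘ ↑(u ^ a) := by
    funext x t
    funext i
    rw [Function.comp_apply, Function.comp_apply, windowHistory_apply, ← hu,
      ← Module.End.coe_pow, ← Units.val_pow_eq_pow_val, ← Module.End.mul_apply, ← Units.val_mul,
      ← zpow_natCast, ← zpow_add, add_comm]
    rfl
  have hHm : Measurable H := measurable_pi_lambda _ fun t => measurable_pi_lambda _ fun i => by
    simp only [H, windowHistory_apply]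
    exact (measurable_pi_apply _).comp (measurable_linearCA.iterate _)
  rw [Measure.map_apply (measurable_windowCoding (fun n => (hmp n).measurable) _)
      (measurableSet_setOf_forall_le_eq a s j),
    setOf_forall_le_eq_eq_preimage, ← Set.preimage_comp, hH, Set.preimage_comp,
    (hmp a).measure_preimage (hHm (measurableSet_singleton _)).nullMeasurableSet]
  have hfiber := measure_preimage_singleton_of_surjective (μ := μ) (F := H.toAddMonoidHom)
    (windowHistory_linearCA_surjective hl hlr hr s) (fun h => hHm (measurableSet_singleton h))
  rw [LinearMap.toAddMonoidHom_coe] at hfiber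
  rw [hfiber]
  simp [ENNReal.inv_pow, ← pow_mul]

end WindowCoding

theorem isNilpotent_natCast_prod_primeFactors {m : ℕ} (hm : m ≠ 0) :
    IsNilpotent ((∏ p ∈ m.primeFactors, p : ℕ) : ZMod m) :=
  ⟨m, by
    rw [← Nat.cast_pow, ZMod.natCast_eq_zero_iff]
    exact Nat.dvd_prod_primeFactors_pow_self hm⟩

/-- Let `m = p₁^{k₁} ⋯ p_h^{k_h}` and `f(x_l,...,x_r) = (p₁p₂⋯p_h)·Σ_{i=l}^{r-1} λ_i x_i
+ λ_r x_r (mod m)` (the factor being the product of the distinct prime factors of `m`),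
with `gcd(λ_r, m) = 1` (i.e. `λ_r` is a unit of `ZMod m`) and `0 < l < r`. Then the CA
`T_{f[l,r]}` over `ZMod m` is invertible and is a Bernoulli automorphism with respect to
the uniform Bernoulli measure `μ`: it is measure-theoretically isomorphic (mod 0) to a
Bernoulli shift. -/
theorem stmt18 (m : ℕ) (hm : 2 ≤ m) (l r : ℤ) (hl : 0 < l) (hlr : l < r)
    (lam : ℤ → ZMod m) (hunit : IsUnit (lam r))
    (T : (ℤ → ZMod m) → ℤ → ZMod m)
    (hT : ∀ x n, T x n =
      ((∏ q ∈ m.primeFactors, q : ℕ) : ZMod m) * ∑ i ∈ Finset.Icc l (r - 1), lam i * x (n + i)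
        + lam r * x (n + r))
    (μ : Measure (ℤ → ZMod m)) [IsProbabilityMeasure μ]
    (hμ : ∀ (a : ℤ) (s : ℕ) (j : ℕ → ZMod m),
      μ {x | ∀ t : ℕ, t ≤ s → x (a + (t : ℤ)) = j t} = ((m : ℝ≥0∞))⁻¹ ^ (s + 1)) :
    Function.Bijective T ∧
    ∃ (N : ℕ) (_ : 0 < N) (q : Fin N → ℝ≥0∞) (_ : ∑ a : Fin N, q a = 1)
      (ν : Measure (ℤ → Fin N)) (_ : IsProbabilityMeasure ν)
      (_ : ∀ (a : ℤ) (s : ℕ) (j : ℕ → Fin N),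
        ν {y | ∀ t : ℕ, t ≤ s → y (a + (t : ℤ)) = j t} = ∏ t ∈ Finset.range (s + 1), q (j t))
      (φ : (ℤ → ZMod m) → ℤ → Fin N) (ψ : (ℤ → Fin N) → ℤ → ZMod m),
      MeasurePreserving φ μ ν ∧ MeasurePreserving ψ ν μ ∧
      (∀ᵐ x ∂μ, ψ (φ x) = x) ∧ (∀ᵐ y ∂ν, φ (ψ y) = y) ∧
      (∀ᵐ x ∂μ, φ (T x) = fun n => φ x (n + 1)) := by
  have : NeZero m := ⟨by omega⟩
  obtain rfl : T = linearCA l r lam ((∏ q ∈ m.primeFactors, q : ℕ) : ZMod m) :=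
    funext fun x => funext fun n => by rw [hT, linearCA_apply]
  obtain ⟨u, hu⟩ := isUnit_linearCA (l := l)
    (isNilpotent_natCast_prod_primeFactors (by omega : m ≠ 0)) hunit
  have hbij := (Module.End.isUnit_iff _).mp ⟨u, hu⟩
  have hμB : IsUniformBernoulli μ := by simpa only [IsUniformBernoulli, ZMod.card] using hμ
  have hmp := hμB.measurePreserving_zpow_linearCA hu
  let e : (Fin r.toNat → ZMod m) ≃ Fin (m ^ r.toNat) :=
    Fintype.equivFinOfCardEq (by simp [ZMod.card])
  have he : Measurable fun (y : ℤ → Fin r.toNat → ZMod m) n => e (y n) := by fun_prop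
  set φ := (fun y n => e (y n)) ∘ windowCoding u r.toNat
  have hφ : MeasurableEmbedding φ :=
    (he.comp (measurable_windowCoding (fun n => (hmp n).measurable) _)).measurableEmbedding
      (Function.Injective.comp (fun y y' h => funext fun n => e.injective (congrFun h n))
        (windowCoding_injective hl hlr hunit hu))
  obtain ⟨ψ, hψ, hψφ, hφψ⟩ := hφ.exists_measurePreserving_inverse μ
  have hν : IsUniformBernoulli (μ.map φ) := by
    rw [← Measure.map_map he (measurable_windowCoding (fun n => (hmp n).measurable) _)]
    exact (isUniformBernoulli_map_windowCoding hl.le hlr hunit hu hμB hmp).map_equiv e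
  refine ⟨hbij, m ^ r.toNat, by positivity, fun _ => ((m ^ r.toNat : ℕ) : ℝ≥0∞)⁻¹, ?_, μ.map φ,
    Measure.isProbabilityMeasure_map hφ.measurable.aemeasurable, fun a s j => ?_, φ, ψ,
    hφ.measurable.measurePreserving μ, hψ, ae_of_all _ hψφ, hφψ, ae_of_all _ fun x => ?_⟩
  · simp [ENNReal.mul_inv_cancel, NeZero.ne m]
  · rw [hν a s j, Finset.prod_const, Finset.card_range, Fintype.card_fin]
  · simp only [φ, Function.comp_apply, ← hu, windowCoding_units_apply]
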